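/- arXiv:0809.1260 — 2 statements merged into one kernel-verified Lean document; each statement's English description precedes it below -/
import Mathlib

section
/- Suppose X and Y are n₁×n₂ real matrices such that XᵀY = 0 and XYᵀ = 0. Then ‖X + Y‖_* = ‖X‖_* + ‖Y‖_*. -/
open Matrix

/-- The nuclear norm of a real matrix: the sum of its singular values,
i.e. the sum of the square roots of the eigenvalues of `Xᵀ * X`. -/
noncomputable def nuclearNorm {m n : Type*} [Fintype m] [Fintype n] [DecidableEq n]
    (X : Matrix m n ℝ) : ℝ :=
  ∑ i, Real.sqrt ((show (Xᵀ * X).IsHermitian by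
    rw [← Matrix.conjTranspose_eq_transpose_of_trivial]
    exact Matrix.isHermitian_conjTranspose_mul_self X).eigenvalues i)

/-!
Writing `‖X‖_* = tr √(XᵀX)`, the hypotheses give `(X + Y)ᵀ(X + Y) = XᵀX + YᵀY` with
`XᵀX · YᵀY = 0`. For positive semidefinite `A`, `B` with `AB = 0` one also has `√A √B = 0`, so
`√A + √B` is a positive square root of `A + B`, i.e. `√(A + B) = √A + √B`; taking traces finishes.
-/

open scoped MatrixOrder ComplexOrder

namespace Matrix

lemma transpose_mul_self_nonneg {m n : Type*} [Fintype m] [Fintype n]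
    (X : Matrix m n ℝ) : 0 ≤ Xᵀ * X := by
  simpa using (posSemidef_conjTranspose_mul_self X).nonneg

variable {n 𝕜 : Type*} [Fintype n] [DecidableEq n] [RCLike 𝕜]

lemma IsHermitian.trace_cfc {A : Matrix n n 𝕜} (hA : A.IsHermitian) (f : ℝ → ℝ) :
    (cfc f A).trace = ∑ i, (f (hA.eigenvalues i) : 𝕜) := by
  rw [hA.cfc_eq, IsHermitian.cfc, Unitary.conjStarAlgAut_apply, trace_mul_cycle,
    Unitary.coe_star_mul_self, one_mul, trace_diagonal]
  rfl

lemma sqrt_mul_sqrt_eq_zero_of_mul_eq_zero {A B : Matrix n n 𝕜} (hA : 0 ≤ A) (hB : 0 ≤ B)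
    (h : A * B = 0) : CFC.sqrt A * CFC.sqrt B = 0 := by
  have hsA : (CFC.sqrt A)ᴴ = CFC.sqrt A := (CFC.sqrt_nonneg A).isSelfAdjoint
  have hsB : (CFC.sqrt B)ᴴ = CFC.sqrt B := (CFC.sqrt_nonneg B).isSelfAdjoint
  have hAB : CFC.sqrt A * B = 0 := by
    rw [← conjTranspose_mul_self_mul_eq_zero, hsA, CFC.sqrt_mul_sqrt_self A, h]
  simpa only [hsB] using (mul_conjTranspose_mul_self_eq_zero (CFC.sqrt B) (CFC.sqrt A)).mp
    (by rw [hsB, CFC.sqrt_mul_sqrt_self B, hAB])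

lemma sqrt_add_of_mul_eq_zero {A B : Matrix n n 𝕜} (hA : 0 ≤ A) (hB : 0 ≤ B)
    (h : A * B = 0) : CFC.sqrt (A + B) = CFC.sqrt A + CFC.sqrt B := by
  have hAB := sqrt_mul_sqrt_eq_zero_of_mul_eq_zero hA hB h
  have hBA : CFC.sqrt B * CFC.sqrt A = 0 := by
    simpa [(CFC.sqrt_nonneg A).isSelfAdjoint.star_eq, (CFC.sqrt_nonneg B).isSelfAdjoint.star_eq]
      using congrArg star hAB
  refine CFC.sqrt_unique ?_ (add_nonneg (CFC.sqrt_nonneg A) (CFC.sqrt_nonneg B))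
  rw [add_mul, mul_add, mul_add, hAB, hBA, CFC.sqrt_mul_sqrt_self A, CFC.sqrt_mul_sqrt_self B,
    add_zero, zero_add]

end Matrix

lemma nuclearNorm_eq_trace_sqrt {m n : Type*} [Fintype m] [Fintype n] [DecidableEq n]
    (X : Matrix m n ℝ) : nuclearNorm X = (CFC.sqrt (Xᵀ * X)).trace := by
  have hX := X.transpose_mul_self_nonneg
  rw [CFC.sqrt_eq_real_sqrt _ hX, cfcₙ_eq_cfc, hX.isSelfAdjoint.isHermitian.trace_cfc]
  rfl

theorem stmt2 (n₁ n₂ : ℕ) (X Y : Matrix (Fin n₁) (Fin n₂) ℝ)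
    (h1 : Xᵀ * Y = 0) (h2 : X * Yᵀ = 0) :
    nuclearNorm (X + Y) = nuclearNorm X + nuclearNorm Y := by
  have hgram : (X + Y)ᵀ * (X + Y) = Xᵀ * X + Yᵀ * Y := by
    have h1' : Yᵀ * X = 0 := by simpa using congrArg transpose h1
    rw [transpose_add, Matrix.add_mul, Matrix.mul_add, Matrix.mul_add, h1, h1', add_zero, zero_add]
  have hprod : Xᵀ * X * (Yᵀ * Y) = 0 := by
    rw [Matrix.mul_assoc, ← Matrix.mul_assoc X, h2, Matrix.zero_mul, Matrix.mul_zero]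
  rw [nuclearNorm_eq_trace_sqrt, nuclearNorm_eq_trace_sqrt, nuclearNorm_eq_trace_sqrt, hgram,
    sqrt_add_of_mul_eq_zero X.transpose_mul_self_nonneg Y.transpose_mul_self_nonneg hprod,
    trace_add]
end

section
/- Let P, P′, Q, Q′ be orthogonal projection matrices on ℝ^n (each projecting onto an r-dimensional subspace) and let W be any n×n real matrix. Then ‖(I−P′) W (I−Q′)‖_* − ‖P′ W Q′‖_* ≥ ‖(I−P) W (I−Q)‖_* − ‖P W Q‖_* − 2(‖P−P′‖ + ‖Q−Q′‖)·‖W‖_*, where ‖·‖ denotes the operator norm. -/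
/-!
The nuclear norm is dual to the operator norm: `tr (Yᵀ X) ≤ ‖Y‖ ‖X‖_*` for every `Y` (expand the
trace in an orthonormal eigenbasis of `Xᵀ X` and apply Cauchy–Schwarz), with equality for the
partial isometry `Y = X V Σ⁺ Vᵀ` of the polar decomposition. Hence `‖·‖_*` is subadditive and
`‖A X B‖_* ≤ ‖A‖ ‖B‖ ‖X‖_*`. Since `A W B - A' W B' = (A - A') W B + A' W (B - B')` and orthogonal
projections and their complements have norm at most `1`, replacing `P, Q` by `P', Q'` moves each
of `‖(I - P) W (I - Q)‖_*` and `‖P W Q‖_*` by at most `(‖P - P'‖ + ‖Q - Q'‖) ‖W‖_*`.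
-/

open Matrix

/-- The operator norm (largest singular value) of a real matrix: the maximum of
the square roots of the eigenvalues of `Xᵀ * X`. -/
noncomputable def operatorNorm {m n : Type*} [Fintype m] [Fintype n] [DecidableEq n]
    (X : Matrix m n ℝ) : ℝ :=
  ⨆ i, Real.sqrt ((show (Xᵀ * X).IsHermitian by
    rw [← Matrix.conjTranspose_eq_transpose_of_trivial]
    exact Matrix.isHermitian_conjTranspose_mul_self X).eigenvalues i)

open scoped Matrix.Norms.L2Operator InnerProductSpace

namespace Matrix

variable {m n : Type*} [Fintype m]

theorem isHermitian_transpose_mul_self (X : Matrix m n ℝ) : (Xᵀ * X).IsHermitian := by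
  simpa using isHermitian_conjTranspose_mul_self X

theorem isStarProjection_of_transpose_eq {P : Matrix m m ℝ} (hsymm : Pᵀ = P)
    (hidem : P * P = P) : IsStarProjection P :=
  ⟨hidem, hsymm⟩

variable [Fintype n] [DecidableEq n]

theorem eigenvalues_transpose_mul_self_nonneg (X : Matrix m n ℝ) (i : n) :
    0 ≤ (isHermitian_transpose_mul_self X).eigenvalues i := by
  simpa using (posSemidef_conjTranspose_mul_self X).eigenvalues_nonneg i

noncomputable def singularValues (X : Matrix m n ℝ) (i : n) : ℝ :=
  √((isHermitian_transpose_mul_self X).eigenvalues i)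

theorem nuclearNorm_eq_sum_singularValues (X : Matrix m n ℝ) :
    nuclearNorm X = ∑ i, X.singularValues i :=
  rfl

theorem singularValues_mul_self (X : Matrix m n ℝ) (i : n) :
    X.singularValues i * X.singularValues i = (isHermitian_transpose_mul_self X).eigenvalues i :=
  Real.mul_self_sqrt (eigenvalues_transpose_mul_self_nonneg X i)

noncomputable def rightSingularVectors (X : Matrix m n ℝ) : Matrix n n ℝ :=
  (isHermitian_transpose_mul_self X).eigenvectorUnitary

theorem rightSingularVectors_mem_unitaryGroup (X : Matrix m n ℝ) :
    X.rightSingularVectors ∈ unitaryGroup n ℝ :=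
  Subtype.prop _

theorem transpose_rightSingularVectors_mul_self (X : Matrix m n ℝ) :
    X.rightSingularVectorsᵀ * X.rightSingularVectors = 1 :=
  mem_unitaryGroup_iff'.mp X.rightSingularVectors_mem_unitaryGroup

theorem transpose_rightSingularVectors_mul_cancel_left {k : Type*} (X : Matrix m n ℝ)
    (Z : Matrix n k ℝ) : X.rightSingularVectorsᵀ * (X.rightSingularVectors * Z) = Z := by
  rw [← Matrix.mul_assoc, transpose_rightSingularVectors_mul_self, Matrix.one_mul]

theorem transpose_mul_self_eq (X : Matrix m n ℝ) :
    Xᵀ * X = X.rightSingularVectors * diagonal (isHermitian_transpose_mul_self X).eigenvalues *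
      X.rightSingularVectorsᵀ := by
  conv_lhs =>
    rw [(isHermitian_transpose_mul_self X).spectral_theorem, Unitary.conjStarAlgAut_apply]
  rfl

theorem inner_toEuclideanLin_toEuclideanLin (Y X : Matrix m n ℝ) (u v : EuclideanSpace ℝ n) :
    ⟪toEuclideanLin Y u, toEuclideanLin X v⟫_ℝ = ⟪u, toEuclideanLin (Yᵀ * X) v⟫_ℝ := by
  simp only [EuclideanSpace.inner_eq_star_dotProduct, toLpLin_apply, star_trivial]
  rw [dotProduct_mulVec, ← mulVec_transpose, mulVec_mulVec]

theorem trace_transpose_mul_eq_sum_inner (Y X : Matrix m n ℝ)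
    (b : OrthonormalBasis n ℝ (EuclideanSpace ℝ n)) :
    (Yᵀ * X).trace = ∑ i, ⟪toEuclideanLin Y (b i), toEuclideanLin X (b i)⟫_ℝ := by
  simp_rw [inner_toEuclideanLin_toEuclideanLin]
  rw [← trace_toLin_eq _ (EuclideanSpace.basisFun n ℝ).toBasis,
    ← toEuclideanLin_eq_toLin_orthonormal, LinearMap.trace_eq_sum_inner _ b]

theorem norm_toEuclideanLin_eigenvectorBasis (X : Matrix m n ℝ) (i : n) :
    ‖toEuclideanLin X ((isHermitian_transpose_mul_self X).eigenvectorBasis i)‖ =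
      X.singularValues i := by
  set hX := isHermitian_transpose_mul_self X
  have hb : toEuclideanLin (Xᵀ * X) (hX.eigenvectorBasis i) =
      hX.eigenvalues i • hX.eigenvectorBasis i := by
    simp [toLpLin_apply, hX.mulVec_eigenvectorBasis]
  rw [singularValues, ← Real.sqrt_sq (norm_nonneg _), ← real_inner_self_eq_norm_sq,
    inner_toEuclideanLin_toEuclideanLin, hb, real_inner_smul_right, real_inner_self_eq_norm_sq,
    hX.eigenvectorBasis.orthonormal.1 i]
  simp

theorem norm_toEuclideanLin_le (Y : Matrix m n ℝ) (v : EuclideanSpace ℝ n) :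
    ‖toEuclideanLin Y v‖ ≤ ‖Y‖ * ‖v‖ :=
  (toEuclideanLin.trans LinearMap.toContinuousLinearMap Y).le_opNorm v

theorem trace_transpose_mul_le (Y X : Matrix m n ℝ) : (Yᵀ * X).trace ≤ ‖Y‖ * nuclearNorm X := by
  set b := (isHermitian_transpose_mul_self X).eigenvectorBasis
  rw [trace_transpose_mul_eq_sum_inner Y X b, nuclearNorm_eq_sum_singularValues, Finset.mul_sum]
  refine Finset.sum_le_sum fun i _ => ?_
  calc ⟪toEuclideanLin Y (b i), toEuclideanLin X (b i)⟫_ℝ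
      ≤ ‖toEuclideanLin Y (b i)‖ * ‖toEuclideanLin X (b i)‖ := real_inner_le_norm _ _
    _ ≤ ‖Y‖ * X.singularValues i := by
      rw [norm_toEuclideanLin_eigenvectorBasis]
      refine mul_le_mul_of_nonneg_right ?_ (Real.sqrt_nonneg _)
      simpa [b.orthonormal.1 i] using norm_toEuclideanLin_le Y (b i)

/-- Since `0⁻¹ = 0`, `diagonal X.singularValues⁻¹` inverts only the nonzero singular values, so this
is the partial isometry of the polar decomposition of `X`. -/
noncomputable def polarFactor (X : Matrix m n ℝ) : Matrix m n ℝ :=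
  X * X.rightSingularVectors * diagonal X.singularValues⁻¹ * X.rightSingularVectorsᵀ

theorem trace_transpose_polarFactor_mul (X : Matrix m n ℝ) :
    ((polarFactor X)ᵀ * X).trace = nuclearNorm X := by
  rw [polarFactor]
  simp only [transpose_mul, transpose_transpose, diagonal_transpose, Matrix.mul_assoc]
  rw [transpose_mul_self_eq]
  simp only [Matrix.mul_assoc, transpose_rightSingularVectors_mul_cancel_left]
  rw [trace_mul_comm, Matrix.mul_assoc, Matrix.mul_assoc, transpose_rightSingularVectors_mul_self,
    Matrix.mul_one, diagonal_mul_diagonal, trace_diagonal, nuclearNorm_eq_sum_singularValues]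
  exact Finset.sum_congr rfl fun i _ => by
    rw [Pi.inv_apply, ← singularValues_mul_self, ← mul_assoc, inv_mul_mul_self]

theorem norm_rightSingularVectors_mul_mul_transpose (X : Matrix m n ℝ) (Z : Matrix n n ℝ) :
    ‖X.rightSingularVectors * Z * X.rightSingularVectorsᵀ‖ = ‖Z‖ := by
  change ‖_ * _ * star X.rightSingularVectors‖ = _
  rw [CStarRing.norm_mul_mem_unitary _ (Unitary.star_mem X.rightSingularVectors_mem_unitaryGroup),
    CStarRing.norm_mem_unitary_mul _ X.rightSingularVectors_mem_unitaryGroup]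

theorem norm_polarFactor_le (X : Matrix m n ℝ) : ‖polarFactor X‖ ≤ 1 := by
  have hgram : (polarFactor X)ᵀ * polarFactor X = X.rightSingularVectors *
      diagonal (X.singularValues⁻¹ * ((isHermitian_transpose_mul_self X).eigenvalues *
        X.singularValues⁻¹)) * X.rightSingularVectorsᵀ := by
    rw [polarFactor]
    simp only [transpose_mul, transpose_transpose, diagonal_transpose, Matrix.mul_assoc]
    rw [← Matrix.mul_assoc Xᵀ X]
    simp only [transpose_mul_self_eq, Matrix.mul_assoc,
      transpose_rightSingularVectors_mul_cancel_left]
    simp only [← Matrix.mul_assoc, diagonal_mul_diagonal]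
    rfl
  have hdiag : ‖X.singularValues⁻¹ * ((isHermitian_transpose_mul_self X).eigenvalues *
      X.singularValues⁻¹)‖ ≤ 1 := by
    refine (pi_norm_le_iff_of_nonneg zero_le_one).mpr fun i => ?_
    rw [Pi.mul_apply, Pi.mul_apply, Pi.inv_apply, ← singularValues_mul_self]
    rcases eq_or_ne (X.singularValues i) 0 with h | h <;> simp [h]
  have h := l2_opNorm_conjTranspose_mul_self (polarFactor X)
  rw [conjTranspose_eq_transpose_of_trivial, hgram, norm_rightSingularVectors_mul_mul_transpose,
    l2_opNorm_diagonal] at h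
  exact (mul_self_le_mul_self_iff (norm_nonneg _) zero_le_one).mpr
    (by rw [mul_one, ← h]; exact hdiag)

theorem nuclearNorm_nonneg (X : Matrix m n ℝ) : 0 ≤ nuclearNorm X :=
  Finset.sum_nonneg fun _ _ => Real.sqrt_nonneg _

theorem nuclearNorm_le_of_forall_trace_le {X : Matrix m n ℝ} {c : ℝ}
    (h : ∀ Y : Matrix m n ℝ, ‖Y‖ ≤ 1 → (Yᵀ * X).trace ≤ c) : nuclearNorm X ≤ c := by
  rw [← trace_transpose_polarFactor_mul]
  exact h _ (norm_polarFactor_le X)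

theorem trace_transpose_mul_le_nuclearNorm {Y : Matrix m n ℝ} (hY : ‖Y‖ ≤ 1)
    (X : Matrix m n ℝ) : (Yᵀ * X).trace ≤ nuclearNorm X :=
  (trace_transpose_mul_le Y X).trans (mul_le_of_le_one_left (nuclearNorm_nonneg X) hY)

theorem nuclearNorm_add_le (A B : Matrix m n ℝ) :
    nuclearNorm (A + B) ≤ nuclearNorm A + nuclearNorm B :=
  nuclearNorm_le_of_forall_trace_le fun Y hY => by
    rw [Matrix.mul_add, trace_add]
    exact add_le_add (trace_transpose_mul_le_nuclearNorm hY A)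
      (trace_transpose_mul_le_nuclearNorm hY B)

section Products

variable {k p : Type*} [Fintype k] [DecidableEq k] [Fintype p] [DecidableEq p] [DecidableEq m]

theorem nuclearNorm_mul_mul_le (A : Matrix k m ℝ) (X : Matrix m n ℝ) (B : Matrix n p ℝ) :
    nuclearNorm (A * X * B) ≤ ‖A‖ * ‖B‖ * nuclearNorm X :=
  nuclearNorm_le_of_forall_trace_le fun Y hY => by
    have htrace : (Yᵀ * (A * X * B)).trace = ((Aᵀ * Y * Bᵀ)ᵀ * X).trace := by
      rw [transpose_mul, transpose_mul, transpose_transpose, transpose_transpose,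
        Matrix.mul_assoc B, trace_mul_comm B]
      simp only [Matrix.mul_assoc]
    have hnorm : ‖Aᵀ * Y * Bᵀ‖ ≤ ‖A‖ * ‖B‖ := by
      calc ‖Aᵀ * Y * Bᵀ‖ ≤ ‖Aᵀ‖ * ‖Y‖ * ‖Bᵀ‖ :=
            (l2_opNorm_mul _ _).trans
              (mul_le_mul_of_nonneg_right (l2_opNorm_mul _ _) (norm_nonneg _))
        _ = ‖A‖ * ‖Y‖ * ‖B‖ := by
          rw [← conjTranspose_eq_transpose_of_trivial, ← conjTranspose_eq_transpose_of_trivial,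
            l2_opNorm_conjTranspose, l2_opNorm_conjTranspose]
        _ ≤ ‖A‖ * 1 * ‖B‖ := by gcongr
        _ = ‖A‖ * ‖B‖ := by ring
    rw [htrace]
    exact (trace_transpose_mul_le _ X).trans
      (mul_le_mul_of_nonneg_right hnorm (nuclearNorm_nonneg X))

theorem nuclearNorm_mul_mul_le_nuclearNorm_mul_mul_add (A A' : Matrix k m ℝ) (W : Matrix m n ℝ)
    (B B' : Matrix n p ℝ) (hA' : ‖A'‖ ≤ 1) (hB : ‖B‖ ≤ 1) :
    nuclearNorm (A * W * B) ≤
      nuclearNorm (A' * W * B') + (‖A - A'‖ + ‖B - B'‖) * nuclearNorm W := by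
  have hsplit : A * W * B = A' * W * B' + ((A - A') * W * B + A' * W * (B - B')) := by
    simp only [Matrix.sub_mul, Matrix.mul_sub]
    abel
  calc nuclearNorm (A * W * B)
      ≤ nuclearNorm (A' * W * B') +
          (nuclearNorm ((A - A') * W * B) + nuclearNorm (A' * W * (B - B'))) := by
        rw [hsplit]
        exact (nuclearNorm_add_le _ _).trans (add_le_add_right (nuclearNorm_add_le _ _) _)
    _ ≤ nuclearNorm (A' * W * B') +
          (‖A - A'‖ * ‖B‖ * nuclearNorm W + ‖A'‖ * ‖B - B'‖ * nuclearNorm W) := by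
        gcongr <;> exact nuclearNorm_mul_mul_le _ _ _
    _ ≤ nuclearNorm (A' * W * B') +
          (‖A - A'‖ * 1 * nuclearNorm W + 1 * ‖B - B'‖ * nuclearNorm W) := by
        have := nuclearNorm_nonneg W
        gcongr
    _ = nuclearNorm (A' * W * B') + (‖A - A'‖ + ‖B - B'‖) * nuclearNorm W := by ring

end Products

theorem norm_le_operatorNorm (X : Matrix m n ℝ) : ‖X‖ ≤ operatorNorm X := by
  have hσ : ∀ i, X.singularValues i ≤ operatorNorm X := fun i =>
    le_ciSup (Set.finite_range X.singularValues).bddAbove i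
  have hc : 0 ≤ operatorNorm X := Real.iSup_nonneg fun _ => Real.sqrt_nonneg _
  have h := l2_opNorm_conjTranspose_mul_self X
  rw [conjTranspose_eq_transpose_of_trivial, transpose_mul_self_eq,
    norm_rightSingularVectors_mul_mul_transpose, l2_opNorm_diagonal] at h
  have heig : ‖(isHermitian_transpose_mul_self X).eigenvalues‖ ≤
      operatorNorm X * operatorNorm X := by
    refine (pi_norm_le_iff_of_nonneg (mul_self_nonneg _)).mpr fun i => ?_
    rw [← singularValues_mul_self, Real.norm_eq_abs, abs_mul_self]
    exact mul_self_le_mul_self (Real.sqrt_nonneg _) (hσ i)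
  exact (mul_self_le_mul_self_iff (norm_nonneg X) hc).mpr (h ▸ heig)

end Matrix

theorem stmt15_general (n : ℕ)
    (P P' Q Q' : Matrix (Fin n) (Fin n) ℝ)
    (hPSymm : Pᵀ = P) (hPIdem : P * P = P)
    (hP'Symm : P'ᵀ = P') (hP'Idem : P' * P' = P')
    (hQSymm : Qᵀ = Q) (hQIdem : Q * Q = Q)
    (hQ'Symm : Q'ᵀ = Q') (hQ'Idem : Q' * Q' = Q')
    (W : Matrix (Fin n) (Fin n) ℝ) :
    nuclearNorm ((1 - P') * W * (1 - Q')) - nuclearNorm (P' * W * Q') ≥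
      nuclearNorm ((1 - P) * W * (1 - Q)) - nuclearNorm (P * W * Q) -
        2 * (operatorNorm (P - P') + operatorNorm (Q - Q')) * nuclearNorm W := by
  have hP := isStarProjection_of_transpose_eq hPSymm hPIdem
  have hP' := isStarProjection_of_transpose_eq hP'Symm hP'Idem
  have hQ := isStarProjection_of_transpose_eq hQSymm hQIdem
  have hQ' := isStarProjection_of_transpose_eq hQ'Symm hQ'Idem
  have hcompl := nuclearNorm_mul_mul_le_nuclearNorm_mul_mul_add (1 - P) (1 - P') W
    (1 - Q) (1 - Q') hP'.one_sub.norm_le hQ.one_sub.norm_le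
  have hrange := nuclearNorm_mul_mul_le_nuclearNorm_mul_mul_add P' P W Q' Q hP.norm_le hQ'.norm_le
  rw [sub_sub_sub_cancel_left, sub_sub_sub_cancel_left] at hcompl
  rw [norm_sub_rev P', norm_sub_rev Q'] at hcompl hrange
  have hop : ‖P - P'‖ + ‖Q - Q'‖ ≤ operatorNorm (P - P') + operatorNorm (Q - Q') :=
    add_le_add (norm_le_operatorNorm _) (norm_le_operatorNorm _)
  linarith [mul_le_mul_of_nonneg_right hop (nuclearNorm_nonneg W)]

/-- For rank-`r` orthogonal projections `P, P′, Q, Q′` on `ℝⁿ` and any `W`: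
`‖(I−P′)W(I−Q′)‖_* − ‖P′WQ′‖_* ≥ ‖(I−P)W(I−Q)‖_* − ‖PWQ‖_*
  − 2(‖P−P′‖ + ‖Q−Q′‖)‖W‖_*`. -/
theorem stmt15 (n r : ℕ)
    (P P' Q Q' : Matrix (Fin n) (Fin n) ℝ)
    (hPSymm : Pᵀ = P) (hPIdem : P * P = P) (hPrank : P.rank = r)
    (hP'Symm : P'ᵀ = P') (hP'Idem : P' * P' = P') (hP'rank : P'.rank = r)
    (hQSymm : Qᵀ = Q) (hQIdem : Q * Q = Q) (hQrank : Q.rank = r)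
    (hQ'Symm : Q'ᵀ = Q') (hQ'Idem : Q' * Q' = Q') (hQ'rank : Q'.rank = r)
    (W : Matrix (Fin n) (Fin n) ℝ) :
    nuclearNorm ((1 - P') * W * (1 - Q')) - nuclearNorm (P' * W * Q') ≥
      nuclearNorm ((1 - P) * W * (1 - Q)) - nuclearNorm (P * W * Q) -
        2 * (operatorNorm (P - P') + operatorNorm (Q - Q')) * nuclearNorm W :=
  stmt15_general n P P' Q Q' hPSymm hPIdem hP'Symm hP'Idem hQSymm hQIdem hQ'Symm hQ'Idem W
end
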